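/- The number N_{r,s}(n,k) of solutions (x_1,...,x_k) modulo r^s of the congruence x_1 + ... + x_k ≡ n (mod r^s) subject to (x_i, r^s)_s = 1 for all i equals (1/r^s) Σ_{d | r} (c_{r,s}((r/d)^s))^k · c_{d,s}(n). -/

import Mathlib

open Finset

/-- The generalized gcd `(a,b)_s`: the largest `s`-th power dividing both `a` and `b`. -/
noncomputable def ggcd (s a b : ℕ) : ℕ :=
  sSup {m : ℕ | (∃ l : ℕ, m = l ^ s) ∧ m ∣ a ∧ m ∣ b}

/-- The generalized Ramanujan sum `c_{r,s}(n)`. -/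
noncomputable def crs (s r n : ℕ) : ℂ :=
  ∑ j ∈ Finset.Icc 1 (r ^ s),
    if ggcd s j (r ^ s) = 1 then Complex.exp (2 * Real.pi * Complex.I * n * j / (r ^ s)) else 0

/-- The discrete Fourier transform of an `r^s`-periodic function. -/
noncomputable def dft (s r : ℕ) (f : ℕ → ℂ) (n : ℕ) : ℂ :=
  ∑ k ∈ Finset.Icc 1 (r ^ s), f k * Complex.exp (-(2 * Real.pi * Complex.I * k * n / (r ^ s)))

/-- A function is `(r,s)`-even if `f(n) = f((n, r^s)_s)` for all `n`. -/
def IsRSEven (s r : ℕ) (f : ℕ → ℂ) : Prop := ∀ n, f n = f (ggcd s n (r ^ s))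

/-!
Let `m = r^s` and `e(x) = exp(2πix/m)`. Orthogonality of the characters of `ZMod m` gives
`N_{r,s}(n,k) = m⁻¹ ∑_t c_{r,s}(t)^k e(-tn)`, since `c_{r,s}(t)` is the sum of `e(ta)` over the
`a` with `(a, m)_s = 1`. Möbius inversion of this condition gives
`c_{r,s}(t) = ∑_{d ∣ r, d^s ∣ t} μ(r/d) d^s`, so `c_{r,s}` is real and depends only on
`(t, m)_s`, which equals `(r/d)^s` for a unique `d ∣ r`. The `t` with `(t, m)_s = (r/d)^s` are
exactly the `(r/d)^s j` with `j` running over the residues mod `d^s` with `(j, d^s)_s = 1`, so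
summing `e(-tn)` over them gives `c_{d,s}(n)`.
-/
open ArithmeticFunction
open scoped ArithmeticFunction.Moebius ComplexConjugate
open ZMod (stdAddChar)

section ggcd

variable {s d : ℕ}

lemma exists_ggcd_eq_pow (hs : s ≠ 0) (hd : d ≠ 0) (a : ℕ) :
    ∃ e, ggcd s a (d ^ s) = e ^ s ∧ ∀ l, l ∣ e ↔ l ∣ d ∧ l ^ s ∣ a := by
  set S := {m : ℕ | (∃ l : ℕ, m = l ^ s) ∧ m ∣ a ∧ m ∣ d ^ s}
  have hbdd : BddAbove S := ⟨d ^ s, fun m hm => Nat.le_of_dvd (by positivity) hm.2.2⟩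
  obtain ⟨⟨e, he⟩, hea, hed⟩ : sSup S ∈ S :=
    Nat.sSup_mem ⟨1, ⟨1, (one_pow s).symm⟩, one_dvd _, one_dvd _⟩ hbdd
  rw [he] at hea hed
  rw [Nat.pow_dvd_pow_iff hs] at hed
  refine ⟨e, he, fun l => ⟨fun hle => ⟨hle.trans hed, (pow_dvd_pow_of_dvd hle s).trans hea⟩,
    fun ⟨hld, hla⟩ => ?_⟩⟩
  -- `lcm l e` is again admissible, so maximality of `e` forces `lcm l e = e`.
  have hlcm : Nat.lcm l e ∣ d := Nat.lcm_dvd hld hed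
  have hmem : Nat.lcm l e ^ s ∈ S :=
    ⟨⟨_, rfl⟩, Nat.pow_lcm_pow ▸ Nat.lcm_dvd hla hea, pow_dvd_pow_of_dvd hlcm s⟩
  have hle : Nat.lcm l e ≤ e := (Nat.pow_le_pow_iff_left hs).1 (he ▸ le_csSup hbdd hmem)
  have hge : e ≤ Nat.lcm l e :=
    Nat.le_of_dvd (Nat.pos_of_dvd_of_pos hlcm (Nat.pos_of_ne_zero hd)) (Nat.dvd_lcm_right l e)
  exact le_antisymm hle hge ▸ Nat.dvd_lcm_left l e

lemma pow_dvd_ggcd_iff (hs : s ≠ 0) (hd : d ≠ 0) {a l : ℕ} :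
    l ^ s ∣ ggcd s a (d ^ s) ↔ l ∣ d ∧ l ^ s ∣ a := by
  obtain ⟨e, he, hdvd⟩ := exists_ggcd_eq_pow hs hd a
  rw [he, Nat.pow_dvd_pow_iff hs, hdvd]

lemma ggcd_congr (hs : s ≠ 0) (hd : d ≠ 0) {a b : ℕ}
    (h : ∀ l, l ∣ d → (l ^ s ∣ a ↔ l ^ s ∣ b)) : ggcd s a (d ^ s) = ggcd s b (d ^ s) := by
  obtain ⟨e, he, hdvd_e⟩ := exists_ggcd_eq_pow hs hd a
  obtain ⟨f, hf, hdvd_f⟩ := exists_ggcd_eq_pow hs hd b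
  have hef : ∀ l, l ∣ e ↔ l ∣ f := fun l => by
    rw [hdvd_e, hdvd_f]
    exact and_congr_right (h l)
  rw [he, hf, Nat.dvd_antisymm ((hef e).1 dvd_rfl) ((hef f).2 dvd_rfl)]

lemma ggcd_mod_self (hs : s ≠ 0) (hd : d ≠ 0) (a : ℕ) :
    ggcd s (a % d ^ s) (d ^ s) = ggcd s a (d ^ s) :=
  ggcd_congr hs hd fun _ hl => Nat.dvd_mod_iff (pow_dvd_pow_of_dvd hl s)

lemma ggcd_pow_mul (hs : s ≠ 0) {q : ℕ} (hq : q ≠ 0) (hd : d ≠ 0) (a : ℕ) :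
    ggcd s (q ^ s * a) ((q * d) ^ s) = q ^ s * ggcd s a (d ^ s) := by
  obtain ⟨e, he, hdvd_e⟩ := exists_ggcd_eq_pow hs hd a
  obtain ⟨E, hE, hdvd_E⟩ := exists_ggcd_eq_pow hs (mul_ne_zero hq hd) (q ^ s * a)
  obtain ⟨g, rfl⟩ : q ∣ E := (hdvd_E q).2 ⟨dvd_mul_right q d, dvd_mul_right _ _⟩
  have hge : ∀ l, l ∣ g ↔ l ∣ e := fun l => by
    rw [hdvd_e, ← Nat.mul_dvd_mul_iff_left (Nat.pos_of_ne_zero hq), hdvd_E, mul_pow,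
      Nat.mul_dvd_mul_iff_left (Nat.pos_of_ne_zero hq),
      Nat.mul_dvd_mul_iff_left (pow_pos (Nat.pos_of_ne_zero hq) s)]
  rw [hE, he, Nat.dvd_antisymm ((hge g).1 dvd_rfl) ((hge e).2 dvd_rfl), mul_pow]

lemma ite_ggcd_eq_one_eq_sum_moebius {R : Type*} [Ring R] (hs : s ≠ 0) (hd : d ≠ 0)
    (a : ℕ) :
    (if ggcd s a (d ^ s) = 1 then 1 else 0 : R) = ∑ l ∈ d.divisors with l ^ s ∣ a, (μ l : R) := by
  obtain ⟨e, he, hdvd⟩ := exists_ggcd_eq_pow hs hd a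
  have he0 : e ≠ 0 := by
    rintro rfl
    exact hd (Nat.eq_zero_of_zero_dvd ((hdvd 0).1 dvd_rfl).1)
  have hfilter : {l ∈ d.divisors | l ^ s ∣ a} = e.divisors := by
    ext l
    simp only [mem_filter, Nat.mem_divisors, hdvd]
    tauto
  have hmoeb := congrArg (· e) (coe_moebius_mul_coe_zeta (R := R))
  simp only [coe_mul_zeta_apply, intCoe_apply, one_apply] at hmoeb
  simp only [hfilter, hmoeb, he, Nat.pow_eq_one, hs, or_false]

end ggcd

section reindex

variable {M : Type*} [AddCommMonoid M] {N : ℕ} [NeZero N]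

lemma sum_Icc_natCast (F : ZMod N → M) : ∑ j ∈ Icc 1 N, F j = ∑ a, F a := by
  refine sum_nbij' (fun j => (j : ZMod N)) (fun a => if a = 0 then N else a.val) ?_ ?_ ?_ ?_ ?_
  · intro j _
    exact mem_univ _
  · intro a _
    rw [mem_Icc]
    split_ifs with ha
    · exact ⟨Nat.one_le_iff_ne_zero.2 (NeZero.ne N), le_rfl⟩
    · exact ⟨Nat.one_le_iff_ne_zero.2 ((ZMod.val_ne_zero a).2 ha), (ZMod.val_lt a).le⟩
  · intro j hj
    rw [mem_Icc] at hj
    obtain rfl | hlt := hj.2.eq_or_lt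
    · simp
    · have hj0 : (j : ZMod N) ≠ 0 := by
        rw [Ne, ZMod.natCast_eq_zero_iff]
        exact Nat.not_dvd_of_pos_of_lt hj.1 hlt
      rw [if_neg hj0, ZMod.val_cast_of_lt hlt]
  · intro a _
    split_ifs with ha
    · simp [ha]
    · exact ZMod.natCast_zmod_val a
  · intro j _
    rfl

lemma val_natCast_mul_val {Q D : ℕ} [NeZero D] (h : Q * D = N) (b : ZMod D) :
    ((Q * b.val : ℕ) : ZMod N).val = Q * b.val := by
  have hQ : 0 < Q := Nat.pos_of_ne_zero fun hQ => NeZero.ne N (by rw [← h, hQ, zero_mul])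
  exact ZMod.val_cast_of_lt (h ▸ Nat.mul_lt_mul_of_pos_left (ZMod.val_lt b) hQ)

lemma sum_filter_dvd_val {Q D : ℕ} [NeZero D] (h : Q * D = N) (f : ZMod N → M) :
    ∑ a with Q ∣ a.val, f a = ∑ b : ZMod D, f ((Q * b.val : ℕ) : ZMod N) := by
  have hQ : 0 < Q := Nat.pos_of_ne_zero fun hQ => NeZero.ne N (by rw [← h, hQ, zero_mul])
  have hval := val_natCast_mul_val h
  symm
  refine sum_nbij' (fun b => ((Q * b.val : ℕ) : ZMod N)) (fun a => ((a.val / Q : ℕ) : ZMod D))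
    ?_ ?_ ?_ ?_ ?_
  · intro b _
    rw [mem_filter, hval]
    exact ⟨mem_univ _, dvd_mul_right _ _⟩
  · intro a _
    exact mem_univ _
  · intro b _
    simp only [hval, Nat.mul_div_cancel_left _ hQ, ZMod.natCast_zmod_val]
  · intro a ha
    rw [mem_filter] at ha
    have hlt : a.val / Q < D :=
      (Nat.div_lt_iff_lt_mul hQ).2 (by rw [mul_comm, h]; exact ZMod.val_lt a)
    simp [ZMod.val_cast_of_lt hlt, Nat.mul_div_cancel' ha.2]
  · intro b _
    rfl

end reindex

lemma AddChar.map_sum_eq_prod {A M ι : Type*} [AddCommMonoid A] [CommMonoid M]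
    (ψ : AddChar A M) (S : Finset ι) (f : ι → A) : ψ (∑ i ∈ S, f i) = ∏ i ∈ S, ψ (f i) := by
  classical
  induction S using Finset.induction_on with
  | empty => simp
  | insert i S hi ih => rw [sum_insert hi, prod_insert hi, ψ.map_add_eq_mul, ih]

section stdAddChar

variable {N : ℕ} [NeZero N]

lemma stdAddChar_natCast (j : ℕ) :
    stdAddChar (j : ZMod N) = Complex.exp (2 * Real.pi * Complex.I * j / N) := by
  rw [ZMod.stdAddChar_apply, ZMod.toCircle_natCast]

lemma stdAddChar_natCast_mul {Q D : ℕ} [NeZero D] (h : Q * D = N) (x : ℕ) :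
    stdAddChar ((Q * x : ℕ) : ZMod N) = stdAddChar (x : ZMod D) := by
  have hQ : (Q : ℂ) ≠ 0 := by
    rintro hQ
    exact NeZero.ne N (by rw [← h, Nat.cast_eq_zero.1 hQ, zero_mul])
  have hD : (D : ℂ) ≠ 0 := Nat.cast_ne_zero.2 (NeZero.ne D)
  rw [stdAddChar_natCast, stdAddChar_natCast, ← h]
  congr 1
  field_simp
  push_cast
  ring

lemma sum_stdAddChar_mul (b : ZMod N) :
    ∑ t : ZMod N, stdAddChar (t * b) = if b = 0 then (N : ℂ) else 0 := by
  rw [AddChar.sum_mulShift b (ZMod.isPrimitive_stdAddChar N), ZMod.card, Nat.cast_ite,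
    Nat.cast_zero]

lemma natCard_sum_eq_sum_stdAddChar (k : ℕ) (p : ZMod N → Prop) [DecidablePred p]
    (n : ZMod N) :
    (Nat.card {x : Fin k → ZMod N // (∀ i, p (x i)) ∧ ∑ i, x i = n} : ℂ) =
      (N : ℂ)⁻¹ * ∑ t, (∑ a with p a, stdAddChar (t * a)) ^ k * stdAddChar (-(t * n)) := by
  have hN : (N : ℂ) ≠ 0 := Nat.cast_ne_zero.2 (NeZero.ne N)
  have hdelta : ∀ y : ZMod N,
      (if y = n then 1 else 0 : ℂ) = (N : ℂ)⁻¹ * ∑ t, stdAddChar (t * (y - n)) := fun y => by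
    simp only [sum_stdAddChar_mul, sub_eq_zero]
    split_ifs <;> simp [hN]
  rw [Nat.card_eq_fintype_card, Fintype.card_subtype, natCast_card_filter]
  calc ∑ x : Fin k → ZMod N, (if (∀ i, p (x i)) ∧ ∑ i, x i = n then 1 else 0 : ℂ)
      = ∑ x : Fin k → ZMod N, (∏ i, if p (x i) then 1 else 0) *
          (if ∑ i, x i = n then 1 else 0) := by
        refine sum_congr rfl fun x _ => ?_
        rw [prod_boole, ite_zero_mul_ite_zero, one_mul]
        simp only [mem_univ, true_implies]
    _ = (N : ℂ)⁻¹ * ∑ t, ∑ x : Fin k → ZMod N, (∏ i, if p (x i) then 1 else 0) *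
          stdAddChar (t * (∑ i, x i - n)) := by
        simp only [hdelta, mul_sum, mul_left_comm _ (N : ℂ)⁻¹]
        exact sum_comm
    _ = (N : ℂ)⁻¹ * ∑ t, (∑ a with p a, stdAddChar (t * a)) ^ k * stdAddChar (-(t * n)) := by
        congr 1
        refine sum_congr rfl fun t _ => ?_
        rw [sum_filter, Fintype.sum_pow, sum_mul]
        refine sum_congr rfl fun x _ => ?_
        rw [mul_sub, sub_eq_add_neg, AddChar.map_add_eq_mul, mul_sum, AddChar.map_sum_eq_prod,
          ← mul_assoc, ← prod_mul_distrib]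
        simp only [ite_mul, one_mul, zero_mul]

lemma sum_filter_dvd_val_stdAddChar {Q D : ℕ} [NeZero D] (h : Q * D = N)
    (n : ℕ) :
    ∑ a : ZMod N with Q ∣ a.val, stdAddChar ((n : ZMod N) * a) = if D ∣ n then (D : ℂ) else 0 := by
  rw [sum_filter_dvd_val h]
  simp_rw [← Nat.cast_mul, mul_left_comm n Q, stdAddChar_natCast_mul h, Nat.cast_mul,
    ZMod.natCast_zmod_val, mul_comm (n : ZMod D)]
  simp only [sum_stdAddChar_mul, ZMod.natCast_eq_zero_iff]

end stdAddChar


section crs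

variable {s r : ℕ}

lemma crs_eq_sum_stdAddChar (hs : s ≠ 0) [NeZero r] (n : ℕ) :
    crs s r n =
      ∑ a : ZMod (r ^ s) with ggcd s a.val (r ^ s) = 1, stdAddChar ((n : ZMod (r ^ s)) * a) := by
  rw [crs, sum_filter, ← sum_Icc_natCast]
  refine sum_congr rfl fun j _ => ?_
  rw [ZMod.val_natCast, ggcd_mod_self hs (NeZero.ne r), ← Nat.cast_mul, stdAddChar_natCast]
  push_cast
  ring_nf

theorem crs_eq_sum_moebius (hs : s ≠ 0) (hr : r ≠ 0) (n : ℕ) :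
    crs s r n = ∑ d ∈ r.divisors with d ^ s ∣ n, (μ (r / d) : ℂ) * (d : ℂ) ^ s := by
  have : NeZero r := ⟨hr⟩
  rw [crs_eq_sum_stdAddChar hs, sum_filter]
  calc ∑ a : ZMod (r ^ s),
        (if ggcd s a.val (r ^ s) = 1 then stdAddChar ((n : ZMod (r ^ s)) * a) else 0)
      = ∑ a : ZMod (r ^ s), ∑ l ∈ r.divisors,
          if l ^ s ∣ a.val then (μ l : ℂ) * stdAddChar ((n : ZMod (r ^ s)) * a) else 0 := by
        refine sum_congr rfl fun a _ => ?_
        rw [← boole_mul, ite_ggcd_eq_one_eq_sum_moebius hs hr, sum_filter, sum_mul]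
        simp only [ite_mul, zero_mul]
    _ = ∑ l ∈ r.divisors, (μ l : ℂ) *
          ∑ a : ZMod (r ^ s) with l ^ s ∣ a.val, stdAddChar ((n : ZMod (r ^ s)) * a) := by
        rw [sum_comm]
        refine sum_congr rfl fun l _ => ?_
        rw [mul_sum, sum_filter]
    _ = ∑ l ∈ r.divisors,
          (μ l : ℂ) * if (r / l) ^ s ∣ n then (((r / l) ^ s : ℕ) : ℂ) else 0 := by
        refine sum_congr rfl fun l hl => ?_
        have : NeZero (r / l) :=
          ⟨(Nat.div_pos (Nat.divisor_le hl) (Nat.pos_of_mem_divisors hl)).ne'⟩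
        rw [sum_filter_dvd_val_stdAddChar
          (by rw [← mul_pow, Nat.mul_div_cancel' (Nat.dvd_of_mem_divisors hl)])]
    _ = _ := by
        rw [sum_filter, ← Nat.sum_div_divisors]
        refine sum_congr rfl fun l hl => ?_
        rw [Nat.div_div_self (Nat.dvd_of_mem_divisors hl) hr]
        split_ifs <;> push_cast <;> ring

theorem isRSEven_crs (hs : s ≠ 0) (hr : r ≠ 0) : IsRSEven s r (crs s r) := fun n => by
  rw [crs_eq_sum_moebius hs hr, crs_eq_sum_moebius hs hr]
  refine sum_congr (filter_congr fun d hd => ?_) fun _ _ => rfl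
  rw [pow_dvd_ggcd_iff hs hr, and_iff_right (Nat.dvd_of_mem_divisors hd)]

lemma conj_crs (hs : s ≠ 0) (hr : r ≠ 0) (n : ℕ) : conj (crs s r n) = crs s r n := by
  rw [crs_eq_sum_moebius hs hr]
  simp

end crs

section fibers

variable {s r : ℕ} [NeZero r]

lemma sum_eq_sum_divisors_filter_ggcd {M : Type*} [AddCommMonoid M] (hs : s ≠ 0)
    (F : ZMod (r ^ s) → M) :
    ∑ t, F t = ∑ d ∈ r.divisors, ∑ t with ggcd s t.val (r ^ s) = (r / d) ^ s, F t := by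
  have hr := NeZero.ne r
  have hmaps : ∀ t ∈ (univ : Finset (ZMod (r ^ s))),
      ggcd s t.val (r ^ s) ∈ r.divisors.image fun d => (r / d) ^ s := by
    intro t _
    obtain ⟨e, he, hdvd⟩ := exists_ggcd_eq_pow hs hr t.val
    have her : e ∣ r := ((hdvd e).1 dvd_rfl).1
    exact mem_image.2 ⟨r / e, Nat.mem_divisors.2 ⟨Nat.div_dvd_of_dvd her, hr⟩,
      by rw [Nat.div_div_self her hr, he]⟩
  have hinj : Set.InjOn (fun d => (r / d) ^ s) r.divisors := by
    intro d hd d' hd' h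
    rw [← Nat.div_div_self (Nat.dvd_of_mem_divisors hd) hr, Nat.pow_left_injective hs h,
      Nat.div_div_self (Nat.dvd_of_mem_divisors hd') hr]
  rw [← sum_fiberwise_of_maps_to hmaps, sum_image hinj]

lemma sum_filter_ggcd_stdAddChar (hs : s ≠ 0) {d : ℕ} (hd : d ∈ r.divisors) (n : ℕ) :
    ∑ t : ZMod (r ^ s) with ggcd s t.val (r ^ s) = (r / d) ^ s,
        stdAddChar (t * (n : ZMod (r ^ s))) = crs s d n := by
  have hr := NeZero.ne r
  have hqd : r / d * d = r := Nat.div_mul_cancel (Nat.dvd_of_mem_divisors hd)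
  have hq : r / d ≠ 0 := fun h => hr (by rw [← hqd, h, zero_mul])
  have : NeZero d := ⟨(Nat.pos_of_mem_divisors hd).ne'⟩
  have h : (r / d) ^ s * d ^ s = r ^ s := by rw [← mul_pow, hqd]
  have hfilter : univ.filter (fun t : ZMod (r ^ s) => ggcd s t.val (r ^ s) = (r / d) ^ s) =
      (univ.filter fun t : ZMod (r ^ s) => (r / d) ^ s ∣ t.val).filter
        fun t => ggcd s t.val (r ^ s) = (r / d) ^ s := by
    rw [filter_filter]
    refine filter_congr fun t _ => ⟨fun ht => ⟨?_, ht⟩, And.right⟩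
    exact ((pow_dvd_ggcd_iff hs hr).1 (ht ▸ dvd_rfl)).2
  rw [hfilter, sum_filter, sum_filter_dvd_val h, crs_eq_sum_stdAddChar hs, sum_filter]
  refine sum_congr rfl fun b _ => ?_
  have hggcd := ggcd_pow_mul hs hq (NeZero.ne d) b.val
  rw [hqd] at hggcd
  simp only [val_natCast_mul_val h, hggcd, mul_eq_left₀ (pow_ne_zero s hq)]
  rw [← Nat.cast_mul, mul_assoc, stdAddChar_natCast_mul h,
    Nat.cast_mul, ZMod.natCast_zmod_val, mul_comm (n : ZMod (d ^ s))]

lemma sum_filter_ggcd_crs_pow_mul (hs : s ≠ 0) {d : ℕ} (hd : d ∈ r.divisors) (k n : ℕ) :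
    ∑ t : ZMod (r ^ s) with ggcd s t.val (r ^ s) = (r / d) ^ s,
        crs s r t.val ^ k * stdAddChar (-(t * (n : ZMod (r ^ s)))) =
      crs s r ((r / d) ^ s) ^ k * crs s d n := by
  have heven : ∀ t ∈ ({t | ggcd s t.val (r ^ s) = (r / d) ^ s} : Finset (ZMod (r ^ s))),
      crs s r t.val = crs s r ((r / d) ^ s) := fun t ht => by
    rw [isRSEven_crs hs (NeZero.ne r) t.val, (mem_filter.1 ht).2]
  rw [sum_congr rfl fun t ht => by rw [heven t ht], ← mul_sum]
  simp_rw [AddChar.map_neg_eq_conj, ← map_sum, sum_filter_ggcd_stdAddChar hs hd,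
    conj_crs hs (Nat.pos_of_mem_divisors hd).ne']

end fibers

theorem stmt11_general (s r n k : ℕ) (hs : 0 < s) (hr : 0 < r) :
    (Nat.card {x : Fin k → ZMod (r ^ s) //
        (∀ i, ggcd s (x i).val (r ^ s) = 1) ∧ (∑ i, x i) = (n : ZMod (r ^ s))} : ℂ) =
      (1 / (r : ℂ) ^ s) * ∑ d ∈ r.divisors, (crs s r ((r / d) ^ s)) ^ k * crs s d n := by
  have : NeZero r := ⟨hr.ne'⟩
  have hcrs : ∀ t : ZMod (r ^ s),
      ∑ a with ggcd s a.val (r ^ s) = 1, stdAddChar (t * a) = crs s r t.val := fun t => by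
    rw [crs_eq_sum_stdAddChar hs.ne', ZMod.natCast_zmod_val]
  refine (natCard_sum_eq_sum_stdAddChar k (fun a => ggcd s a.val (r ^ s) = 1) _).trans ?_
  rw [one_div, Nat.cast_pow]
  simp_rw [hcrs]
  rw [sum_eq_sum_divisors_filter_ggcd hs.ne',
    sum_congr rfl fun d hd => sum_filter_ggcd_crs_pow_mul hs.ne' hd k n]

theorem stmt11 (s r n k : ℕ) (hs : 0 < s) (hr : 0 < r) (hn : 0 < n) :
    (Nat.card {x : Fin k → ZMod (r ^ s) //
        (∀ i, ggcd s (x i).val (r ^ s) = 1) ∧ (∑ i, x i) = (n : ZMod (r ^ s))} : ℂ) =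
      (1 / (r : ℂ) ^ s) * ∑ d ∈ r.divisors, (crs s r ((r / d) ^ s)) ^ k * crs s d n :=
  stmt11_general s r n k hs hr
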